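/- Let p be a prime, let χ1 be a nontrivial Dirichlet character modulo p, and let α, β, γ be integers with p ∤ α·β. Define K(u) = Kl2(γ·u; p) for u ∈ (ℤ/pℤ)^×, L(v) = L_{α,β}(v; p), the normalized multiplicative convolution (K⋆L)(v) = p^{-1/2} Σ_{u (mod p), p ∤ u} K(u)·L(v·inv(u)) (inv(u) the inverse of u mod p), and Z(t) = p^{-1/2} Σ_{a (mod p)} (K⋆L)(a)·e(a·t/p). Then for every integer t, Z(t) = (1/τ(χ1)) · Σ_{u (mod p), p ∤ u} Kl2(β·γ·u; p) · χ1(u·t) · Kl2(α·u·t; p), where χ1(x) = 0 when p | x. -/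

import Mathlib

open Finset

/-- `eR x = exp(2πi·x)`. -/
noncomputable def eR (x : ℝ) : ℂ := Complex.exp (2 * Real.pi * Complex.I * x)

/-- `eZMod c x = e(x/c)` for a residue `x` mod `c`. -/
noncomputable def eZMod (c : ℕ) (x : ZMod c) : ℂ := eR ((x.val : ℝ) / c)

/-- Kloosterman sum `S(a, b; c)`. -/
noncomputable def kloos (a b : ℤ) (c : ℕ) : ℂ :=
  ∑ d ∈ (Finset.range c).filter (fun d => Nat.Coprime d c),
    eZMod c ((a : ZMod c) * (d : ZMod c) + (b : ZMod c) * ((d : ZMod c))⁻¹)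

/-- Normalized Kloosterman sum `Kl2(n; p)`. -/
noncomputable def Kl2 (p : ℕ) (n : ZMod p) : ℂ :=
  ((1 / Real.sqrt p : ℝ) : ℂ) *
    ∑ x1 ∈ Finset.range p, ∑ x2 ∈ Finset.range p,
      if (x1 : ZMod p) * (x2 : ZMod p) = n then eR (((x1 : ℝ) + (x2 : ℝ)) / p) else 0

/-- Gauss sum `τ(χ)` of a Dirichlet character mod `q`. -/
noncomputable def gauss (q : ℕ) (χ : DirichletCharacter ℂ q) : ℂ :=
  ∑ a ∈ Finset.range q, χ (a : ZMod q) * eZMod q (a : ZMod q)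

/-- The sum `L_{α,β}(v; p)` attached to a Dirichlet character mod `p`. -/
noncomputable def Lab (p : ℕ) (χ : DirichletCharacter ℂ p) (α β v : ZMod p) : ℂ :=
  ((1 / Real.sqrt p : ℝ) : ℂ) *
    ∑ b ∈ Finset.range p,
      if Nat.Coprime (((b : ZMod p) + β * v).val) p
      then (starRingEnd ℂ) (χ (b : ZMod p)) * eZMod p (α * ((b : ZMod p) + β * v)⁻¹)
      else 0

/-- The character sum `𝔅(n1, n2, m; q)` (with parameters `r, M1, M2`). -/
noncomputable def frakB (r M1 M2 n1 : ℕ) (n2 m : ℤ) (q : ℕ) : ℂ :=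
  ∑ d ∈ q.divisors, (d : ℂ) * ((ArithmeticFunction.moebius (q / d) : ℤ) : ℂ) *
    ∑ u ∈ (Finset.range (q * r / n1)).filter (fun u => Nat.Coprime u (q * r / n1)),
      if (m : ZMod d) = ((M2 ^ 2 * n1 * u : ℕ) : ZMod d)
      then eZMod (q * r / n1)
        ((n2 : ZMod (q * r / n1)) * ((M1 : ZMod (q * r / n1)) * (u : ZMod (q * r / n1)))⁻¹)
      else 0

/-- The character sum `𝔇(n1, n2, m, q; M1)` (with parameters `r, M2, χ1`). -/
noncomputable def frakD (M1 M2 q r n1 : ℕ) (χ1 : DirichletCharacter ℂ M1) (n2 m : ℤ) : ℂ :=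
  ∑ a ∈ (Finset.range M1).filter (fun a => Nat.Coprime a M1),
    Lab M1 χ1 ((m : ZMod M1) * ((q : ZMod M1) * (M2 : ZMod M1))⁻¹) (M2 : ZMod M1) (a : ZMod M1) *
    Kl2 M1 (-(r : ZMod M1) * (n2 : ZMod M1) *
      ((a : ZMod M1) * (((q * r / n1 : ℕ)) : ZMod M1) ^ 2)⁻¹)

/-!
Over `ZMod p`, with `ψ` the standard additive character, the Fourier transform of a
multiplicative convolution factors: `Σ_a (K ⋆ L)(a) ψ(a t) = Σ_{u ≠ 0} K(u) L̂(u t)`, where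
`L̂(w) = Σ_v L(v) ψ(w v)`. In turn `L` is an additive convolution of `χ̄` with
`y ↦ ψ(α / y)` (on `y ≠ 0`), so `L̂(w)` splits as the twisted Gauss sum
`Σ_b χ̄(b) ψ̄(w b / β) = χ(w / β) τ(χ̄, ψ̄)` times
`Σ_{y ≠ 0} ψ(α / y + w y / β) = √p · Kl2(α w / β)`.
Substituting `u ↦ β u` and using `τ(χ, ψ) τ(χ̄, ψ̄) = p` gives the formula.
-/

section FiniteField

variable {F R : Type*} [Field F] [Fintype F] [CommRing R]

theorem sum_mulConv_mul_addChar [DecidableEq F] (ψ : AddChar F R) (K L : F → R) (t : F) :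
    ∑ a, (∑ u ∈ univ.filter (· ≠ 0), K u * L (a * u⁻¹)) * ψ (a * t)
      = ∑ u ∈ univ.filter (· ≠ 0), K u * ∑ v, L v * ψ (u * t * v) := by
  simp_rw [sum_mul]
  rw [sum_comm]
  refine sum_congr rfl fun u hu => ?_
  have hu : u ≠ 0 := (mem_filter.mp hu).2
  rw [mul_sum, ← (mulLeft_bijective₀ u hu).sum_comp]
  refine sum_congr rfl fun v _ => ?_
  have hcancel : u * v * u⁻¹ = v := by field_simp
  rw [hcancel, mul_right_comm u v t, mul_assoc]

theorem sum_addConv_mul_addChar (ψ : AddChar F R) (f g : F → R) {β : F} (hβ : β ≠ 0) (w : F) :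
    ∑ v, (∑ b, f b * g (b + β * v)) * ψ (w * v)
      = (∑ b, f b * ψ⁻¹ (w / β * b)) * ∑ y, g y * ψ (w / β * y) := by
  simp_rw [sum_mul, mul_sum]
  rw [sum_comm]
  refine sum_congr rfl fun b _ => ?_
  have hshift : Function.Bijective (fun v : F => b + β * v) :=
    (Equiv.addLeft b).bijective.comp (mulLeft_bijective₀ β hβ)
  rw [← hshift.sum_comp (fun y => f b * ψ⁻¹ (w / β * b) * (g y * ψ (w / β * y)))]
  refine sum_congr rfl fun v _ => ?_
  have hw : w * v = w / β * (b + β * v) + -(w / β * b) := by field_simp; ring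
  rw [hw, AddChar.map_add_eq_mul, AddChar.inv_apply]
  ring

theorem sum_inv_mul_addChar_eq [DecidableEq F] (ψ : AddChar F R) (α : F) {c : F} (hc : c ≠ 0) :
    ∑ y, (if y = 0 then 0 else ψ (α * y⁻¹)) * ψ (c * y)
      = ∑ x, if x = 0 then 0 else ψ (x + α * c * x⁻¹) := by
  rw [← (mulLeft_bijective₀ c hc).sum_comp (fun x => if x = 0 then 0 else ψ (x + α * c * x⁻¹))]
  refine sum_congr rfl fun y _ => ?_
  by_cases hy : y = 0
  · simp [hy]
  · rw [if_neg hy, if_neg (mul_ne_zero hc hy), ← AddChar.map_add_eq_mul]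
    congr 1
    field_simp
    ring

theorem gaussSum_mulShift_of_ne_one [IsDomain R] {χ : MulChar F R} (hχ : χ ≠ 1)
    (ψ : AddChar F R) (c : F) :
    gaussSum χ (ψ.mulShift c) = χ⁻¹ c * gaussSum χ ψ := by
  by_cases hc : c = 0
  · rw [hc, MulChar.map_zero, zero_mul]
    simp [gaussSum, MulChar.sum_eq_zero_of_ne_one hχ]
  · simpa using gaussSum_mulShift_eq χ ψ (Units.mk0 c hc)

theorem sum_filter_ne_zero_comp_mul_left [DecidableEq F] {M : Type*} [AddCommMonoid M] (f : F → M)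
    {β : F} (hβ : β ≠ 0) :
    ∑ u ∈ univ.filter (· ≠ 0), f (β * u) = ∑ u ∈ univ.filter (· ≠ 0), f u := by
  rw [sum_filter, sum_filter,
    ← (mulLeft_bijective₀ β hβ).sum_comp (fun u => if u ≠ 0 then f u else 0)]
  simp only [ne_eq, mul_eq_zero, hβ, false_or]

theorem one_div_gaussSum_eq {R : Type*} [Field R] {χ : MulChar F R} (hχ : χ ≠ 1)
    {ψ : AddChar F R} (hψ : ψ.IsPrimitive) (hF : (Fintype.card F : R) ≠ 0) :
    1 / gaussSum χ ψ = gaussSum χ⁻¹ ψ⁻¹ / Fintype.card F := by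
  have h := gaussSum_mul_gaussSum_eq_card hχ hψ
  have hτ : gaussSum χ ψ ≠ 0 := left_ne_zero_of_mul (h ▸ hF)
  rw [div_eq_div_iff hτ hF, one_mul, ← h, mul_comm]

end FiniteField

theorem sum_range_eq_sum_zmod_val {M : Type*} [AddCommMonoid M] {n : ℕ} [NeZero n] (f : ℕ → M) :
    ∑ a ∈ range n, f a = ∑ a : ZMod n, f a.val := by
  obtain ⟨k, rfl⟩ : ∃ k, n = k + 1 := Nat.exists_eq_succ_of_ne_zero (NeZero.ne n)
  exact (Fin.sum_univ_eq_sum_range f _).symm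

section ZModPrime

open ZMod

theorem eZMod_eq_stdAddChar {N : ℕ} [NeZero N] (x : ZMod N) : eZMod N x = stdAddChar x := by
  rw [stdAddChar_apply, toCircle_apply, eZMod, eR]
  push_cast
  ring_nf

theorem eR_natCast_div_eq_stdAddChar {N : ℕ} [NeZero N] (m : ℕ) :
    eR ((m : ℝ) / N) = stdAddChar (m : ZMod N) := by
  rw [← Int.cast_natCast (R := ZMod N), stdAddChar_coe, eR]
  push_cast
  ring_nf

theorem gauss_eq_gaussSum {N : ℕ} [NeZero N] (χ : DirichletCharacter ℂ N) :
    gauss N χ = gaussSum χ stdAddChar := by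
  simp only [gauss, gaussSum, sum_range_eq_sum_zmod_val, natCast_zmod_val, eZMod_eq_stdAddChar]

variable {p : ℕ} [Fact p.Prime]

theorem coprime_val_iff_ne_zero (x : ZMod p) : x.val.Coprime p ↔ x ≠ 0 := by
  rw [← isUnit_iff_coprime, natCast_zmod_val, isUnit_iff_ne_zero]

theorem sum_filter_coprime_eq {M : Type*} [AddCommMonoid M] (f : ℕ → M) :
    ∑ u ∈ (range p).filter (·.Coprime p), f u = ∑ u ∈ univ.filter (· ≠ (0 : ZMod p)), f u.val := by
  simp only [sum_filter, sum_range_eq_sum_zmod_val, coprime_val_iff_ne_zero]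

theorem Kl2_eq_sum {n : ZMod p} (hn : n ≠ 0) :
    Kl2 p n = ((1 / Real.sqrt p : ℝ) : ℂ) *
      ∑ x, if x = 0 then 0 else stdAddChar (x + n * x⁻¹) := by
  have heR (x y : ZMod p) : eR (((x.val : ℝ) + (y.val : ℝ)) / p) = stdAddChar (x + y) := by
    rw [← Nat.cast_add, eR_natCast_div_eq_stdAddChar, Nat.cast_add, natCast_zmod_val,
      natCast_zmod_val]
  simp only [Kl2, sum_range_eq_sum_zmod_val, natCast_zmod_val, heR]
  congr 1
  refine sum_congr rfl fun x _ => ?_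
  by_cases hx : x = 0
  · simp [hx, Ne.symm hn]
  · simp_rw [if_neg hx, ← eq_inv_mul_iff_mul_eq₀ hx, sum_ite_eq', mem_univ, if_true]
    ring_nf

-- The guard stands for the coprimality condition: unguarded, `0⁻¹ = 0` would contribute `ψ 0 = 1`.
theorem Lab_eq_sum (χ : DirichletCharacter ℂ p) (α β v : ZMod p) :
    Lab p χ α β v = ((1 / Real.sqrt p : ℝ) : ℂ) *
      ∑ b, χ⁻¹ b * (if b + β * v = 0 then 0 else stdAddChar (α * (b + β * v)⁻¹)) := by
  simp only [Lab, sum_range_eq_sum_zmod_val, natCast_zmod_val, coprime_val_iff_ne_zero,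
    eZMod_eq_stdAddChar]
  congr 1
  refine sum_congr rfl fun b _ => ?_
  split_ifs <;> simp_all [← MulChar.star_apply']

theorem sum_Lab_mul_stdAddChar {χ : DirichletCharacter ℂ p} (hχ : χ ≠ 1) {α β : ZMod p}
    (hα : α ≠ 0) (hβ : β ≠ 0) (w : ZMod p) :
    ∑ v, Lab p χ α β v * stdAddChar (w * v)
      = gaussSum χ⁻¹ stdAddChar⁻¹ * (χ (w / β) * Kl2 p (α * (w / β))) := by
  have hgauss : ∑ b, χ⁻¹ b * stdAddChar⁻¹ (w / β * b) = χ (w / β) * gaussSum χ⁻¹ stdAddChar⁻¹ := by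
    have h := gaussSum_mulShift_of_ne_one (inv_ne_one.mpr hχ) stdAddChar⁻¹ (w / β)
    rw [inv_inv] at h
    exact h
  simp_rw [Lab_eq_sum, mul_assoc, ← mul_sum]
  rw [sum_addConv_mul_addChar _ (χ⁻¹ ·) (fun y => if y = 0 then 0 else stdAddChar (α * y⁻¹)) hβ w,
    hgauss]
  by_cases hc : w / β = 0
  · simp [hc, MulChar.map_zero]
  · rw [sum_inv_mul_addChar_eq _ _ hc, Kl2_eq_sum (mul_ne_zero hα hc)]
    ring

end ZModPrime

/-- Fourier transform of the multiplicative convolution `K ⋆ L`. -/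
theorem conv_fourier_transform
    (p : ℕ) (hp : p.Prime) (χ1 : DirichletCharacter ℂ p) (hχ1 : χ1 ≠ 1)
    (α β γ : ℤ) (hαβ : ¬ ((p : ℤ) ∣ α * β)) (t : ℤ) :
    ((1 / Real.sqrt p : ℝ) : ℂ) *
      ∑ a ∈ Finset.range p,
        (((1 / Real.sqrt p : ℝ) : ℂ) *
          ∑ u ∈ (Finset.range p).filter (fun u => Nat.Coprime u p),
            Kl2 p ((γ : ZMod p) * (u : ZMod p)) *
              Lab p χ1 (α : ZMod p) (β : ZMod p) ((a : ZMod p) * ((u : ZMod p))⁻¹)) *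
          eZMod p ((a : ZMod p) * (t : ZMod p))
    = (1 / gauss p χ1) *
        ∑ u ∈ (Finset.range p).filter (fun u => Nat.Coprime u p),
          Kl2 p ((β : ZMod p) * (γ : ZMod p) * (u : ZMod p)) *
            χ1 ((u : ZMod p) * (t : ZMod p)) *
            Kl2 p ((α : ZMod p) * (u : ZMod p) * (t : ZMod p)) := by
  have : Fact p.Prime := ⟨hp⟩
  have hαβ' : (α : ZMod p) * β ≠ 0 := by
    rwa [← Int.cast_mul, Ne, ZMod.intCast_zmod_eq_zero_iff_dvd]
  obtain ⟨hα, hβ⟩ := mul_ne_zero_iff.mp hαβ'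
  have hnorm : ((1 / Real.sqrt p : ℝ) : ℂ) * ((1 / Real.sqrt p : ℝ) : ℂ) = (p : ℂ)⁻¹ := by
    rw [← Complex.ofReal_mul, one_div_mul_one_div, Real.mul_self_sqrt (Nat.cast_nonneg p)]
    push_cast
    rw [one_div]
  simp only [sum_range_eq_sum_zmod_val, sum_filter_coprime_eq, ZMod.natCast_zmod_val,
    eZMod_eq_stdAddChar, gauss_eq_gaussSum,
    one_div_gaussSum_eq hχ1 (ZMod.isPrimitive_stdAddChar p) (by simpa using hp.ne_zero),
    ZMod.card]
  simp_rw [mul_assoc, ← mul_sum, ← mul_assoc, sum_mulConv_mul_addChar,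
    sum_Lab_mul_stdAddChar hχ1 hα hβ]
  conv_lhs => rw [← sum_filter_ne_zero_comp_mul_left _ hβ]
  rw [hnorm, mul_sum, mul_sum]
  refine sum_congr rfl fun u _ => ?_
  have hcancel : (β : ZMod p) * u * t / β = u * t := by field_simp
  rw [hcancel, mul_left_comm (γ : ZMod p), ← mul_assoc (β : ZMod p), ← mul_assoc (α : ZMod p)]
  ring
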